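/- Let a ∈ ℝ^{d×d} be symmetric positive semidefinite, φ₀, φ₁ : ℝ^d → (0,∞) twice differentiable, θ ∈ [0,1], and φ = φ₀^θ φ₁^{1-θ}. Then at every point x, trace(a ∇²φ(x)) ≤ θ (φ(x)/φ₀(x)) trace(a ∇²φ₀(x)) + (1-θ) (φ(x)/φ₁(x)) trace(a ∇²φ₁(x)). -/

import Mathlib

/-- The `(i,j)` second partial derivative of `f` at `x`. -/
noncomputable def secondPartial (d : ℕ) (f : EuclideanSpace ℝ (Fin d) → ℝ)
    (x : EuclideanSpace ℝ (Fin d)) (i j : Fin d) : ℝ :=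
  fderiv ℝ (fun y => fderiv ℝ f y (EuclideanSpace.single j 1)) x (EuclideanSpace.single i 1)

/-!
Since `φ = exp (θ log φ₀ + (1 - θ) log φ₁)` and `∇²f / f = ∇²(log f) + ∇(log f) ∇(log f)ᵀ` for
positive `f`, the quantity `trace(a ∇²φ) / φ` is the `θ`-combination of the `trace(a ∇²(log φₖ))`
plus the quadratic form of `a` at `θ ∇log φ₀ + (1 - θ) ∇log φ₁`. That form is convex for positive
semidefinite `a`; bounding it by the `θ`-combination of its values at `∇log φ₀` and `∇log φ₁`
reassembles `θ trace(a ∇²φ₀) / φ₀ + (1 - θ) trace(a ∇²φ₁) / φ₁`.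
-/

open Real Matrix

theorem Matrix.PosSemidef.dotProduct_mulVec_comm {n : Type*} [Fintype n] {a : Matrix n n ℝ}
    (ha : a.PosSemidef) (u v : n → ℝ) : u ⬝ᵥ a *ᵥ v = v ⬝ᵥ a *ᵥ u := by
  rw [dotProduct_mulVec, dotProduct_comm, ← mulVec_transpose,
    ← conjTranspose_eq_transpose_of_trivial, ha.isHermitian.eq]

theorem Matrix.PosSemidef.dotProduct_mulVec_convex_comb_le {n : Type*} [Fintype n]
    {a : Matrix n n ℝ} (ha : a.PosSemidef) (u v : n → ℝ) {θ : ℝ} (hθ₀ : 0 ≤ θ) (hθ₁ : θ ≤ 1) :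
    (θ • u + (1 - θ) • v) ⬝ᵥ a *ᵥ (θ • u + (1 - θ) • v) ≤
      θ * (u ⬝ᵥ a *ᵥ u) + (1 - θ) * (v ⬝ᵥ a *ᵥ v) := by
  -- the gap is `θ (1 - θ)` times the quadratic form at `u - v`
  have hdiff := ha.dotProduct_mulVec_nonneg (u - v)
  have hcomm := ha.dotProduct_mulVec_comm u v
  simp only [star_trivial, mulVec_add, mulVec_sub, mulVec_smul, dotProduct_add, add_dotProduct,
    dotProduct_sub, sub_dotProduct, dotProduct_smul, smul_dotProduct, smul_eq_mul] at hdiff ⊢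
  nlinarith [mul_nonneg hθ₀ (sub_nonneg.2 hθ₁)]

section Partials

variable {d : ℕ}

noncomputable def firstPartial (f : EuclideanSpace ℝ (Fin d) → ℝ)
    (x : EuclideanSpace ℝ (Fin d)) (i : Fin d) : ℝ :=
  fderiv ℝ f x (EuclideanSpace.single i 1)

theorem secondPartial_eq_firstPartial_firstPartial (f : EuclideanSpace ℝ (Fin d) → ℝ)
    (x : EuclideanSpace ℝ (Fin d)) (i j : Fin d) :
    secondPartial d f x i j = firstPartial (fun y => firstPartial f y j) x i :=
  rfl

variable {f g g₀ g₁ : EuclideanSpace ℝ (Fin d) → ℝ} {x : EuclideanSpace ℝ (Fin d)}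

theorem ContDiff.differentiable_firstPartial (hf : ContDiff ℝ 2 f) (j : Fin d) :
    Differentiable ℝ (fun y => firstPartial f y j) :=
  ((hf.fderiv_right (m := 1) (by norm_num)).clm_apply contDiff_const).differentiable
    (by norm_num)

theorem firstPartial_add (hf : DifferentiableAt ℝ f x) (hg : DifferentiableAt ℝ g x) :
    firstPartial (fun y => f y + g y) x = firstPartial f x + firstPartial g x := by
  ext i
  simp [firstPartial, fderiv_fun_add hf hg]

theorem firstPartial_const_mul (hf : DifferentiableAt ℝ f x) (c : ℝ) :
    firstPartial (fun y => c * f y) x = c • firstPartial f x := by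
  ext i
  simp [firstPartial, fderiv_const_mul hf]

theorem secondPartial_add (hf : ContDiff ℝ 2 f) (hg : ContDiff ℝ 2 g) (i j : Fin d) :
    secondPartial d (fun y => f y + g y) x i j =
      secondPartial d f x i j + secondPartial d g x i j := by
  have hinner : (fun y => firstPartial (fun y => f y + g y) y j) =
      fun y => firstPartial f y j + firstPartial g y j := by
    funext y
    rw [firstPartial_add (hf.differentiable two_ne_zero y) (hg.differentiable two_ne_zero y)]
    rfl
  rw [secondPartial_eq_firstPartial_firstPartial, hinner, firstPartial_add
    (hf.differentiable_firstPartial j x) (hg.differentiable_firstPartial j x)]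
  rfl

theorem secondPartial_const_mul (hf : ContDiff ℝ 2 f) (c : ℝ) (i j : Fin d) :
    secondPartial d (fun y => c * f y) x i j = c * secondPartial d f x i j := by
  have hinner : (fun y => firstPartial (fun y => c * f y) y j) =
      fun y => c * firstPartial f y j := by
    funext y
    rw [firstPartial_const_mul (hf.differentiable two_ne_zero y)]
    rfl
  rw [secondPartial_eq_firstPartial_firstPartial, hinner,
    firstPartial_const_mul (hf.differentiable_firstPartial j x)]
  rfl

theorem firstPartial_mul_add_mul (hg₀ : DifferentiableAt ℝ g₀ x) (hg₁ : DifferentiableAt ℝ g₁ x)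
    (c₀ c₁ : ℝ) :
    firstPartial (fun y => c₀ * g₀ y + c₁ * g₁ y) x =
      c₀ • firstPartial g₀ x + c₁ • firstPartial g₁ x := by
  rw [firstPartial_add (hg₀.const_mul c₀) (hg₁.const_mul c₁), firstPartial_const_mul hg₀,
    firstPartial_const_mul hg₁]

theorem sum_mul_secondPartial_mul_add_mul (a : Matrix (Fin d) (Fin d) ℝ) (hg₀ : ContDiff ℝ 2 g₀)
    (hg₁ : ContDiff ℝ 2 g₁) (c₀ c₁ : ℝ) :
    ∑ i, ∑ j, a i j * secondPartial d (fun y => c₀ * g₀ y + c₁ * g₁ y) x i j =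
      c₀ * ∑ i, ∑ j, a i j * secondPartial d g₀ x i j +
        c₁ * ∑ i, ∑ j, a i j * secondPartial d g₁ x i j := by
  simp only [secondPartial_add (contDiff_const.mul hg₀) (contDiff_const.mul hg₁),
    secondPartial_const_mul hg₀, secondPartial_const_mul hg₁, mul_add, Finset.sum_add_distrib,
    Finset.mul_sum, mul_left_comm]

theorem secondPartial_exp_comp (hg : ContDiff ℝ 2 g) (i j : Fin d) :
    secondPartial d (fun y => exp (g y)) x i j =
      exp (g x) * (secondPartial d g x i j + firstPartial g x i * firstPartial g x j) := by
  have hg₁ : Differentiable ℝ g := hg.differentiable two_ne_zero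
  have hinner : (fun y => firstPartial (fun y => exp (g y)) y j) =
      fun y => exp (g y) * firstPartial g y j := by
    funext y
    simp [firstPartial, fderiv_exp (hg₁ y)]
  rw [secondPartial_eq_firstPartial_firstPartial, hinner, firstPartial,
    fderiv_fun_mul (hg₁ x).exp (hg.differentiable_firstPartial j x), fderiv_exp (hg₁ x)]
  simp only [_root_.add_apply, _root_.smul_apply, smul_eq_mul,
    secondPartial, firstPartial]
  ring

theorem sum_mul_secondPartial_of_pos (a : Matrix (Fin d) (Fin d) ℝ)
    (hlog : ContDiff ℝ 2 (fun y => log (f y))) (hpos : ∀ y, 0 < f y) :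
    ∑ i, ∑ j, a i j * secondPartial d f x i j =
      f x * (∑ i, ∑ j, a i j * secondPartial d (fun y => log (f y)) x i j +
        firstPartial (fun y => log (f y)) x ⬝ᵥ a *ᵥ firstPartial (fun y => log (f y)) x) := by
  have hf : f = fun y => exp (log (f y)) := funext fun y => (exp_log (hpos y)).symm
  conv_lhs => rw [hf]
  simp only [secondPartial_exp_comp hlog, exp_log (hpos x), dotProduct, mulVec, Finset.mul_sum,
    mul_add, Finset.sum_add_distrib]
  congr 1 <;>
  exact Finset.sum_congr rfl fun i _ => Finset.sum_congr rfl fun j _ => by ring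

end Partials

/-- Concavity-type inequality for `trace(a ∇²·)` along geometric interpolations
`φ = φ₀^θ φ₁^{1-θ}` of positive twice differentiable functions, for `a` symmetric
positive semidefinite. -/
theorem stmt_5 (d : ℕ) (a : Matrix (Fin d) (Fin d) ℝ) (ha : a.PosSemidef)
    (φ₀ φ₁ : EuclideanSpace ℝ (Fin d) → ℝ)
    (hφ₀ : ContDiff ℝ 2 φ₀) (hφ₁ : ContDiff ℝ 2 φ₁)
    (hpos₀ : ∀ x, 0 < φ₀ x) (hpos₁ : ∀ x, 0 < φ₁ x)
    (θ : ℝ) (hθ : θ ∈ Set.Icc (0 : ℝ) 1)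
    (φ : EuclideanSpace ℝ (Fin d) → ℝ)
    (hφ : ∀ x, φ x = φ₀ x ^ θ * φ₁ x ^ (1 - θ))
    (x : EuclideanSpace ℝ (Fin d)) :
    ∑ i, ∑ j, a i j * secondPartial d φ x i j ≤
      θ * (φ x / φ₀ x) * ∑ i, ∑ j, a i j * secondPartial d φ₀ x i j +
      (1 - θ) * (φ x / φ₁ x) * ∑ i, ∑ j, a i j * secondPartial d φ₁ x i j := by
  obtain ⟨hθ₀, hθ₁⟩ := hθ
  have hlog₀ : ContDiff ℝ 2 (fun y => log (φ₀ y)) := hφ₀.log fun y => (hpos₀ y).ne'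
  have hlog₁ : ContDiff ℝ 2 (fun y => log (φ₁ y)) := hφ₁.log fun y => (hpos₁ y).ne'
  have hpow₀ : ∀ y, 0 < φ₀ y ^ θ := fun y => rpow_pos_of_pos (hpos₀ y) θ
  have hpow₁ : ∀ y, 0 < φ₁ y ^ (1 - θ) := fun y => rpow_pos_of_pos (hpos₁ y) (1 - θ)
  have hpos : ∀ y, 0 < φ y := fun y => hφ y ▸ mul_pos (hpow₀ y) (hpow₁ y)
  have hlog : (fun y => log (φ y)) = fun y => θ * log (φ₀ y) + (1 - θ) * log (φ₁ y) := by
    funext y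
    rw [hφ, log_mul (hpow₀ y).ne' (hpow₁ y).ne', log_rpow (hpos₀ y), log_rpow (hpos₁ y)]
  have hlog_smooth : ContDiff ℝ 2 (fun y => log (φ y)) :=
    hlog ▸ (contDiff_const.mul hlog₀).add (contDiff_const.mul hlog₁)
  rw [sum_mul_secondPartial_of_pos a hlog_smooth hpos, sum_mul_secondPartial_of_pos a hlog₀ hpos₀,
    sum_mul_secondPartial_of_pos a hlog₁ hpos₁, hlog,
    sum_mul_secondPartial_mul_add_mul a hlog₀ hlog₁,
    firstPartial_mul_add_mul (hlog₀.differentiable two_ne_zero x)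
      (hlog₁.differentiable two_ne_zero x),
    mul_assoc θ, ← mul_assoc (φ x / φ₀ x), div_mul_cancel₀ _ (hpos₀ x).ne',
    mul_assoc (1 - θ), ← mul_assoc (φ x / φ₁ x), div_mul_cancel₀ _ (hpos₁ x).ne']
  linear_combination mul_le_mul_of_nonneg_left (ha.dotProduct_mulVec_convex_comb_le
    (firstPartial (fun y => log (φ₀ y)) x) (firstPartial (fun y => log (φ₁ y)) x) hθ₀ hθ₁)
    (hpos x).le
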